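/- (Lemma on convergence of distances, part (i).) Under the algorithm setup with Assumption 1 and Condition (C1): for every H ∈ ⋂_{n≥m₀} Fix(T_n) the limit lim_{n→∞} ‖H_n − H‖_F exists, and for every W ∈ ⋂_{n≥m₀} Fix(S_n) the limit lim_{n→∞} ‖W_n − W‖_F exists; in particular the sequences (H_n) and (W_n) are bounded. -/

import Mathlib

open Matrix Filter

/-- Frobenius norm of a real matrix. -/
noncomputable def frob {m n : Type*} [Fintype m] [Fintype n] (X : Matrix m n ℝ) : ℝ :=
  Real.sqrt (∑ i, ∑ j, (X i j) ^ 2)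

/-- Frobenius inner product of two real matrices. -/
noncomputable def fip {m n : Type*} [Fintype m] [Fintype n] (X Y : Matrix m n ℝ) : ℝ :=
  ∑ i, ∑ j, X i j * Y i j

/-- Entrywise projection onto the nonnegative orthant. -/
def pplus {m n : Type*} (X : Matrix m n ℝ) : Matrix m n ℝ :=
  Matrix.of fun i j => max (X i j) 0

/-- Entrywise nonnegativity of a matrix. -/
def matNonneg {m n : Type*} (X : Matrix m n ℝ) : Prop := ∀ i j, 0 ≤ X i j

section Aux
variable {m n k : Type*} [Fintype m] [Fintype n] [Fintype k]

noncomputable def toE (X : Matrix m n ℝ) : EuclideanSpace ℝ (m × n) := WithLp.toLp 2 (fun p : m × n => X p.1 p.2)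

lemma toE_sub (X Y : Matrix m n ℝ) : toE (X - Y) = toE X - toE Y := rfl
lemma toE_add (X Y : Matrix m n ℝ) : toE (X + Y) = toE X + toE Y := rfl
lemma toE_smul (c : ℝ) (X : Matrix m n ℝ) : toE (c • X) = c • toE X := rfl

lemma frob_eq_norm (X : Matrix m n ℝ) : frob X = ‖toE X‖ := by
  rw [EuclideanSpace.norm_eq, frob, Fintype.sum_prod_type]
  simp [toE, Real.norm_eq_abs, sq_abs]

lemma fip_eq_inner (X Y : Matrix m n ℝ) : fip X Y = inner ℝ (toE X) (toE Y) := by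
  rw [fip]
  rw [PiLp.inner_apply, Fintype.sum_prod_type]
  simp [toE, RCLike.inner_apply, starRingEnd_apply, mul_comm]

lemma frob_nonneg (X : Matrix m n ℝ) : 0 ≤ frob X := Real.sqrt_nonneg _

lemma frob_sq (X : Matrix m n ℝ) : frob X ^ 2 = fip X X := by
  rw [frob_eq_norm, fip_eq_inner, real_inner_self_eq_norm_sq]

lemma fip_trace (X Y : Matrix m n ℝ) : fip X Y = Matrix.trace (Xᵀ * Y) := by
  simp only [Matrix.trace, Matrix.diag, Matrix.mul_apply, Matrix.transpose_apply, fip]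
  exact Finset.sum_comm ..

end Aux
section Aux2
variable {m n k : Type*} [Fintype m] [Fintype n] [Fintype k]

lemma fip_self_nonneg (X : Matrix m n ℝ) : 0 ≤ fip X X :=
  Finset.sum_nonneg fun _ _ => Finset.sum_nonneg fun _ _ => mul_self_nonneg _

lemma frob_eq_sqrt_fip (X : Matrix m n ℝ) : frob X = Real.sqrt (fip X X) := by
  simp [frob, fip, pow_two]

lemma frob_transpose (X : Matrix m n ℝ) : frob Xᵀ = frob X := by
  rw [frob, frob, Finset.sum_comm]
  simp [Matrix.transpose_apply]

lemma frob_mul_le (A : Matrix m k ℝ) (B : Matrix k n ℝ) : frob (A * B) ≤ frob A * frob B := by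
  rw [frob, frob, frob, ← Real.sqrt_mul (by positivity)]
  apply Real.sqrt_le_sqrt
  calc ∑ i, ∑ j, ((A * B) i j) ^ 2
      ≤ ∑ i, ∑ j, (∑ l, A i l ^ 2) * (∑ l, B l j ^ 2) := by
        refine Finset.sum_le_sum fun i _ => Finset.sum_le_sum fun j _ => ?_
        simpa [Matrix.mul_apply] using
          Finset.sum_mul_sq_le_sq_mul_sq Finset.univ (fun l => A i l) (fun l => B l j)
    _ = (∑ i, ∑ l, A i l ^ 2) * (∑ l, ∑ j, B l j ^ 2) := by
        rw [Finset.sum_comm (f := fun l j => B l j ^ 2)]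
        exact (Finset.sum_mul_sum _ _ _ _).symm
    _ = _ := rfl

end Aux2
section Aux3
variable {n k : Type*} [Fintype n] [Fintype k] [DecidableEq k]

lemma fip_symm_mul (B : Matrix k k ℝ) (hBt : Bᵀ = B) (Z : Matrix k n ℝ) :
    fip ((B * B) * Z) Z = fip (B * Z) (B * Z) := by
  rw [fip_trace, fip_trace]
  simp [Matrix.transpose_mul, hBt, Matrix.mul_assoc]

open scoped MatrixOrder in
lemma psd_fip_nonneg {A : Matrix k k ℝ} (hA : A.PosSemidef) (Z : Matrix k n ℝ) :
    0 ≤ fip (A * Z) Z := by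
  have hBt : (CFC.sqrt A)ᵀ = CFC.sqrt A := by
    rw [← Matrix.conjTranspose_eq_transpose_of_trivial]
    exact (CFC.sqrt_nonneg A).posSemidef.1
  rw [← CFC.sqrt_mul_sqrt_self A hA.nonneg, fip_symm_mul _ hBt]
  exact fip_self_nonneg _

open scoped MatrixOrder in
lemma psd_fip_sq_le {A : Matrix k k ℝ} (hA : A.PosSemidef) (Z : Matrix k n ℝ) :
    fip (A * Z) (A * Z) ≤ frob A * fip (A * Z) Z := by
  set B := CFC.sqrt A with hB
  have hBt : Bᵀ = B := by
    rw [← Matrix.conjTranspose_eq_transpose_of_trivial]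
    exact (CFC.sqrt_nonneg A).posSemidef.1
  have hBB : B * B = A := CFC.sqrt_mul_sqrt_self A hA.nonneg
  set Y := B * Z with hY
  have h1 : A * Z = B * Y := by rw [hY, ← Matrix.mul_assoc, hBB]
  have h2 : fip (A * Z) (A * Z) = fip (A * Y) Y := by
    rw [h1, ← fip_symm_mul B hBt Y, hBB]
  have h3 : fip Y Y = fip (A * Z) Z := by rw [← hBB, fip_symm_mul B hBt Z]
  have h4 : fip (A * Y) Y ≤ frob (A * Y) * frob Y := by
    rw [fip_eq_inner, frob_eq_norm, frob_eq_norm]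
    exact real_inner_le_norm _ _
  have h5 : frob (A * Y) ≤ frob A * frob Y := frob_mul_le A Y
  have h6 : frob Y ^ 2 = fip Y Y := frob_sq Y
  nlinarith [frob_nonneg Y, frob_nonneg A, frob_nonneg (A * Y)]

lemma step_nonexp {A : Matrix k k ℝ} (hA : A.PosSemidef) {c : ℝ}
    (hc0 : 0 ≤ c) (hc2 : c * frob A ≤ 2) (Z : Matrix k n ℝ) :
    frob (Z - c • (A * Z)) ≤ frob Z := by
  have hip : fip (A * Z) (A * Z) ≤ frob A * fip (A * Z) Z := psd_fip_sq_le hA Z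
  have hnn : 0 ≤ fip (A * Z) Z := psd_fip_nonneg hA Z
  have key : c * fip (A * Z) (A * Z) ≤ 2 * fip (A * Z) Z := by
    nlinarith [frob_nonneg A]
  have hx : frob (Z - c • (A * Z)) ^ 2 ≤ frob Z ^ 2 := by
    rw [frob_eq_norm, frob_eq_norm, toE_sub, toE_smul]
    rw [@norm_sub_sq_real (EuclideanSpace ℝ (k × n))]
    have h1 : inner ℝ (toE Z) (c • toE (A * Z)) = c * fip (A * Z) Z := by
      rw [real_inner_smul_right, fip_eq_inner, real_inner_comm]
    have h2 : ‖c • toE (A * Z)‖ ^ 2 = c ^ 2 * fip (A * Z) (A * Z) := by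
      rw [norm_smul, mul_pow, ← frob_eq_norm, frob_sq]
      simp [sq_abs]
    rw [h1, h2]
    nlinarith
  nlinarith [frob_nonneg (Z - c • (A * Z)), frob_nonneg Z]

end Aux3
section Aux4
variable {m n : Type*} [Fintype m] [Fintype n]

lemma frob_pplus_sub_pplus_le (X Y : Matrix m n ℝ) :
    frob (pplus X - pplus Y) ≤ frob (X - Y) := by
  rw [frob, frob]
  apply Real.sqrt_le_sqrt
  refine Finset.sum_le_sum fun i _ => Finset.sum_le_sum fun j _ => ?_
  have h : |max (X i j) 0 - max (Y i j) 0| ≤ |X i j - Y i j| :=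
    abs_max_sub_max_le_abs _ _ _
  have : ((pplus X - pplus Y) i j) = max (X i j) 0 - max (Y i j) 0 := by
    simp [pplus, Matrix.sub_apply]
  rw [this, ← sq_abs, ← sq_abs ((X - Y) i j), Matrix.sub_apply]
  exact pow_le_pow_left₀ (abs_nonneg _) h 2

lemma frob_mul_transpose_symm (X : Matrix m n ℝ) : frob (Xᵀ * X) = frob (X * Xᵀ) := by
  rw [frob_eq_sqrt_fip, frob_eq_sqrt_fip]
  congr 1
  rw [fip_trace, fip_trace]
  simp only [Matrix.transpose_mul, Matrix.transpose_transpose]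
  rw [Matrix.mul_assoc, Matrix.trace_mul_comm]
  simp [Matrix.mul_assoc]

lemma frob_add_le (X Y : Matrix m n ℝ) : frob (X + Y) ≤ frob X + frob Y := by
  rw [frob_eq_norm, frob_eq_norm, frob_eq_norm, toE_add]
  exact norm_add_le _ _

lemma frob_smul (c : ℝ) (X : Matrix m n ℝ) : frob (c • X) = |c| * frob X := by
  rw [frob_eq_norm, frob_eq_norm, toE_smul, norm_smul, Real.norm_eq_abs]

lemma frob_convex_le {a : ℝ} (ha0 : 0 ≤ a) (ha1 : a ≤ 1) (X Y : Matrix m n ℝ) :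
    frob (a • X + (1 - a) • Y) ≤ a * frob X + (1 - a) * frob Y := by
  calc frob (a • X + (1 - a) • Y) ≤ frob (a • X) + frob ((1 - a) • Y) := frob_add_le _ _
    _ = a * frob X + (1 - a) * frob Y := by
        rw [frob_smul, frob_smul, abs_of_nonneg ha0, abs_of_nonneg (by linarith)]

lemma exists_lim_of_eventually_antitone (a : ℕ → ℝ) (m₀ : ℕ)
    (h0 : ∀ n, 0 ≤ a n) (hd : ∀ n, m₀ ≤ n → a (n + 1) ≤ a n) :
    ∃ l, Filter.Tendsto a Filter.atTop (nhds l) := by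
  have hanti : Antitone fun p => a (m₀ + p) :=
    antitone_nat_of_succ_le fun p => hd _ (Nat.le_add_right _ _)
  have hbdd : BddBelow (Set.range fun p => a (m₀ + p)) :=
    ⟨0, by rintro x ⟨p, rfl⟩; exact h0 _⟩
  have h := tendsto_atTop_ciInf hanti hbdd
  refine ⟨⨅ i, a (m₀ + i), (Filter.tendsto_add_atTop_iff_nat m₀).mp ?_⟩
  simpa [add_comm] using h

end Aux4
section Aux5

lemma frob_pos_of_le_div {A : ℝ} {c : ℝ} (hc0 : 0 < c) (hA0 : 0 ≤ A) (h : c ≤ 2 / A) :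
    c * A ≤ 2 := by
  rcases eq_or_lt_of_le hA0 with h0 | h0
  · rw [← h0]; norm_num
  · exact (le_div_iff₀ h0).mp h

lemma T_step_nonexp {M R N : ℕ} (W : Matrix (Fin M) (Fin R) ℝ) (V : Matrix (Fin M) (Fin N) ℝ)
    {c : ℝ} (hc0 : 0 < c) (hc2 : c ≤ 2 / frob (Wᵀ * W)) (X Y : Matrix (Fin R) (Fin N) ℝ) :
    frob (pplus (X - c • (Wᵀ * (W * X - V))) - pplus (Y - c • (Wᵀ * (W * Y - V))))
      ≤ frob (X - Y) := by
  have hA : (Wᵀ * W).PosSemidef := by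
    have h := Matrix.posSemidef_conjTranspose_mul_self W
    rwa [Matrix.conjTranspose_eq_transpose_of_trivial] at h
  have hmul : c * frob (Wᵀ * W) ≤ 2 := frob_pos_of_le_div hc0 (frob_nonneg _) hc2
  calc frob (pplus (X - c • (Wᵀ * (W * X - V))) - pplus (Y - c • (Wᵀ * (W * Y - V))))
      ≤ frob ((X - c • (Wᵀ * (W * X - V))) - (Y - c • (Wᵀ * (W * Y - V)))) :=
        frob_pplus_sub_pplus_le _ _
    _ = frob ((X - Y) - c • ((Wᵀ * W) * (X - Y))) := by
        congr 1
        simp only [Matrix.mul_sub, Matrix.mul_assoc, smul_sub]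
        abel
    _ ≤ frob (X - Y) := step_nonexp hA hc0.le hmul _

lemma S_step_nonexp {M R N : ℕ} (Hm : Matrix (Fin R) (Fin N) ℝ) (V : Matrix (Fin M) (Fin N) ℝ)
    {c : ℝ} (hc0 : 0 < c) (hc2 : c ≤ 2 / frob (Hmᵀ * Hm)) (X Y : Matrix (Fin M) (Fin R) ℝ) :
    frob (pplus (X - c • ((X * Hm - V) * Hmᵀ)) - pplus (Y - c • ((Y * Hm - V) * Hmᵀ)))
      ≤ frob (X - Y) := by
  have hA : (Hm * Hmᵀ).PosSemidef := by
    have h := Matrix.posSemidef_self_mul_conjTranspose Hm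
    rwa [Matrix.conjTranspose_eq_transpose_of_trivial] at h
  have hAt : (Hm * Hmᵀ)ᵀ = Hm * Hmᵀ := by
    rw [Matrix.transpose_mul, Matrix.transpose_transpose]
  have hc2' : c ≤ 2 / frob (Hm * Hmᵀ) := by rwa [← frob_mul_transpose_symm]
  have hmul : c * frob (Hm * Hmᵀ) ≤ 2 := frob_pos_of_le_div hc0 (frob_nonneg _) hc2'
  calc frob (pplus (X - c • ((X * Hm - V) * Hmᵀ)) - pplus (Y - c • ((Y * Hm - V) * Hmᵀ)))
      ≤ frob ((X - c • ((X * Hm - V) * Hmᵀ)) - (Y - c • ((Y * Hm - V) * Hmᵀ))) :=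
        frob_pplus_sub_pplus_le _ _
    _ = frob ((X - Y) - c • ((X - Y) * (Hm * Hmᵀ))) := by
        congr 1
        simp only [Matrix.sub_mul, Matrix.mul_assoc, smul_sub]
        abel
    _ = frob (((X - Y) - c • ((X - Y) * (Hm * Hmᵀ)))ᵀ) := (frob_transpose _).symm
    _ = frob ((X - Y)ᵀ - c • ((Hm * Hmᵀ) * (X - Y)ᵀ)) := by
        rw [Matrix.transpose_sub, Matrix.transpose_smul, Matrix.transpose_mul, hAt]
    _ ≤ frob ((X - Y)ᵀ) := step_nonexp hA hc0.le hmul _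
    _ = frob (X - Y) := frob_transpose _

end Aux5

lemma bounded_of_eventually_dec {m n : Type*} [Fintype m] [Fintype n]
    (D : ℕ → Matrix m n ℝ) (F : Matrix m n ℝ) (m₀ : ℕ)
    (hd : ∀ k, m₀ ≤ k → frob (D (k + 1)) ≤ frob (D k)) :
    ∃ B : ℝ, ∀ k, frob (D k + F) ≤ B := by
  have hstep : ∀ p, frob (D (m₀ + p)) ≤ frob (D m₀) := by
    intro p
    induction p with
    | zero => simp
    | succ p ih => exact le_trans (hd _ (Nat.le_add_right _ _)) ih
  refine ⟨(∑ i ∈ Finset.range (m₀ + 1), frob (D i)) + frob F, fun k => ?_⟩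
  have hB : frob (D k) ≤ ∑ i ∈ Finset.range (m₀ + 1), frob (D i) := by
    rcases le_or_gt k m₀ with h | h
    · exact Finset.single_le_sum (fun i _ => frob_nonneg _) (Finset.mem_range.mpr (by omega))
    · obtain ⟨p, rfl⟩ : ∃ p, k = m₀ + p := ⟨k - m₀, by omega⟩
      exact le_trans (hstep p)
        (Finset.single_le_sum (fun i _ => frob_nonneg _) (Finset.mem_range.mpr (by omega)))
  have := frob_add_le (D k) F
  linarith

theorem stmt_12
    (M N R : ℕ) (hM : 0 < M) (hN : 0 < N) (hR : 0 < R)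
    (V : Matrix (Fin M) (Fin N) ℝ)
    (W : ℕ → Matrix (Fin M) (Fin R) ℝ) (H : ℕ → Matrix (Fin R) (Fin N) ℝ)
    (α β μ lam : ℕ → ℝ)
    (T : ℕ → Matrix (Fin R) (Fin N) ℝ → Matrix (Fin R) (Fin N) ℝ)
    (S : ℕ → Matrix (Fin M) (Fin R) ℝ → Matrix (Fin M) (Fin R) ℝ)
    (hW0 : matNonneg (W 0)) (hH0 : matNonneg (H 0))
    (hα : ∀ n, α n ∈ Set.Icc (0:ℝ) 1) (hβ : ∀ n, β n ∈ Set.Icc (0:ℝ) 1)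
    (hμ : ∀ n, W n ≠ 0 → 0 < μ n ∧ μ n ≤ 2 / frob ((W n)ᵀ * W n))
    (hT : ∀ n, W n ≠ 0 → ∀ X, T n X = pplus (X - μ n • ((W n)ᵀ * (W n * X - V))))
    (hT0 : ∀ n, W n = 0 → ∀ X, T n X = X)
    (hHrec : ∀ n, H (n + 1) = α n • H n + (1 - α n) • T n (H n))
    (hlam : ∀ n, H (n + 1) ≠ 0 → 0 < lam n ∧ lam n ≤ 2 / frob ((H (n + 1))ᵀ * H (n + 1)))
    (hS : ∀ n, H (n + 1) ≠ 0 → ∀ X, S n X = pplus (X - lam n • ((X * H (n + 1) - V) * (H (n + 1))ᵀ)))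
    (hS0 : ∀ n, H (n + 1) = 0 → ∀ X, S n X = X)
    (hWrec : ∀ n, W (n + 1) = β n • W n + (1 - β n) • S n (W n))
    (m₀ : ℕ)
    (hFixS : ∃ Wf : Matrix (Fin M) (Fin R) ℝ, ∀ n ≥ m₀, S n Wf = Wf)
    (hFixT : ∃ Hf : Matrix (Fin R) (Fin N) ℝ, ∀ n ≥ m₀, T n Hf = Hf)
    (hC1α : 0 < atTop.liminf (fun n => α n) ∧ atTop.limsup (fun n => α n) < 1)
    (hC1β : 0 < atTop.liminf (fun n => β n) ∧ atTop.limsup (fun n => β n) < 1)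
    :
    (∀ Hf : Matrix (Fin R) (Fin N) ℝ, (∀ n ≥ m₀, T n Hf = Hf) →
      ∃ l : ℝ, Tendsto (fun n => frob (H n - Hf)) atTop (nhds l)) ∧
    (∀ Wf : Matrix (Fin M) (Fin R) ℝ, (∀ n ≥ m₀, S n Wf = Wf) →
      ∃ l : ℝ, Tendsto (fun n => frob (W n - Wf)) atTop (nhds l)) ∧
    (∃ B : ℝ, ∀ n, frob (H n) ≤ B) ∧ (∃ B : ℝ, ∀ n, frob (W n) ≤ B) := by
  obtain ⟨Hf0, hHf0⟩ := hFixT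
  obtain ⟨Wf0, hWf0⟩ := hFixS
  have hTne : ∀ n X Y, frob (T n X - T n Y) ≤ frob (X - Y) := by
    intro n X Y
    by_cases hw : W n = 0
    · rw [hT0 n hw X, hT0 n hw Y]
    · rw [hT n hw X, hT n hw Y]
      exact T_step_nonexp (W n) V (hμ n hw).1 (hμ n hw).2 X Y
  have hSne : ∀ n X Y, frob (S n X - S n Y) ≤ frob (X - Y) := by
    intro n X Y
    by_cases hw : H (n + 1) = 0
    · rw [hS0 n hw X, hS0 n hw Y]
    · rw [hS n hw X, hS n hw Y]
      exact S_step_nonexp (H (n + 1)) V (hlam n hw).1 (hlam n hw).2 X Y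
  have hHdec : ∀ Hf : Matrix (Fin R) (Fin N) ℝ, (∀ n ≥ m₀, T n Hf = Hf) →
      ∀ n, m₀ ≤ n → frob (H (n + 1) - Hf) ≤ frob (H n - Hf) := by
    intro Hf hfix n hn
    have heq : H (n + 1) - Hf = α n • (H n - Hf) + (1 - α n) • (T n (H n) - Hf) := by
      rw [hHrec n]; module
    rw [heq]
    have h1 := frob_convex_le (hα n).1 (hα n).2 (H n - Hf) (T n (H n) - Hf)
    have h2 : frob (T n (H n) - Hf) ≤ frob (H n - Hf) := by
      conv_lhs => rw [← hfix n hn]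
      exact hTne n (H n) Hf
    have ha := (hα n).1
    have hb := (hα n).2
    nlinarith [frob_nonneg (H n - Hf)]
  have hWdec : ∀ Wf : Matrix (Fin M) (Fin R) ℝ, (∀ n ≥ m₀, S n Wf = Wf) →
      ∀ n, m₀ ≤ n → frob (W (n + 1) - Wf) ≤ frob (W n - Wf) := by
    intro Wf hfix n hn
    have heq : W (n + 1) - Wf = β n • (W n - Wf) + (1 - β n) • (S n (W n) - Wf) := by
      rw [hWrec n]; module
    rw [heq]
    have h1 := frob_convex_le (hβ n).1 (hβ n).2 (W n - Wf) (S n (W n) - Wf)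
    have h2 : frob (S n (W n) - Wf) ≤ frob (W n - Wf) := by
      conv_lhs => rw [← hfix n hn]
      exact hSne n (W n) Wf
    have ha := (hβ n).1
    have hb := (hβ n).2
    nlinarith [frob_nonneg (W n - Wf)]
  refine ⟨?_, ?_, ?_, ?_⟩
  · intro Hf hfix
    exact exists_lim_of_eventually_antitone _ m₀ (fun n => frob_nonneg _) (hHdec Hf hfix)
  · intro Wf hfix
    exact exists_lim_of_eventually_antitone _ m₀ (fun n => frob_nonneg _) (hWdec Wf hfix)
  · obtain ⟨B, hB⟩ := bounded_of_eventually_dec (fun n => H n - Hf0) Hf0 m₀ (hHdec Hf0 hHf0)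
    exact ⟨B, fun n => by simpa using hB n⟩
  · obtain ⟨B, hB⟩ := bounded_of_eventually_dec (fun n => W n - Wf0) Wf0 m₀ (hWdec Wf0 hWf0)
    exact ⟨B, fun n => by simpa using hB n⟩
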